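/- Let h:[0,b]→[0,∞) be concave, positive on (0,b), β>0, and let g(t)=c(δ-t) on [γ,δ] (with 0≤γ<δ, b≤δ, c>0) satisfy g(x₁)=h(x₁) for some x₁∈(γ,b), ∫_γ^δ g^β = ∫_0^b h^β, and ∫_{x₁}^δ g^β = ∫_{x₁}^b h^β (extending h by 0 on [b,δ] and g by 0 on [0,γ]). Then for every s∈[0,δ], ∫_s^b h(t)^β dt ≤ ∫_s^δ g(t)^β dt. -/

import Mathlib

/-!
Write `H`, `G` for `h ^ β`, `g ^ β` extended by zero. As `h - g` is concave with a zero at `x₁`,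
the difference `G - H` is `≤ 0` on `[0, γ)`, `≥ 0` on `[γ, x₁]` (otherwise `h < g` on all of
`(x₁, b]`, contradicting the equality of the tail integrals from `x₁`), and on `[x₁, δ]` it changes
sign at most once, from `-` to `+`. Hence every tail integral of `G - H` is nonnegative: it is
either a vanishing integral (from `0` or from `x₁`) minus an initial piece where `G ≤ H`, or such
a vanishing integral plus a piece where `G ≥ H`, or the integral of a nonnegative function.
-/

open MeasureTheory Set intervalIntegral

section TailComparison

variable {f g : ℝ → ℝ} {a q s d : ℝ}

theorem IntervalIntegrable.of_mem_Icc_left (hf : IntervalIntegrable f volume a d)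
    (hs : s ∈ Icc a d) : IntervalIntegrable f volume s d :=
  hf.mono_set (uIcc_subset_uIcc (Icc_subset_uIcc hs) right_mem_uIcc)

theorem integral_tail_le_of_ge_on (hf : IntervalIntegrable f volume a d)
    (hg : IntervalIntegrable g volume a d) (hs : s ∈ Icc a d)
    (htotal : ∫ t in a..d, f t ≤ ∫ t in a..d, g t) (hge : ∀ t ∈ Ioo a s, g t ≤ f t) :
    ∫ t in s..d, f t ≤ ∫ t in s..d, g t := by
  have hsub : uIcc a s ⊆ uIcc a d := uIcc_subset_uIcc left_mem_uIcc (Icc_subset_uIcc hs)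
  have hfs := hf.mono_set hsub
  have hgs := hg.mono_set hsub
  rw [← integral_interval_sub_left hf hfs, ← integral_interval_sub_left hg hgs]
  linarith [integral_mono_on_of_le_Ioo hs.1 hgs hfs hge]

theorem integral_tail_le_of_le_on (hf : IntervalIntegrable f volume s d)
    (hg : IntervalIntegrable g volume s d) (hq : q ∈ Icc s d)
    (htail : ∫ t in q..d, f t ≤ ∫ t in q..d, g t) (hle : ∀ t ∈ Ioo s q, f t ≤ g t) :
    ∫ t in s..d, f t ≤ ∫ t in s..d, g t := by
  have hsq : uIcc s q ⊆ uIcc s d := uIcc_subset_uIcc left_mem_uIcc (Icc_subset_uIcc hq)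
  have hqd : uIcc q d ⊆ uIcc s d := uIcc_subset_uIcc (Icc_subset_uIcc hq) right_mem_uIcc
  rw [← integral_add_adjacent_intervals (hf.mono_set hsq) (hf.mono_set hqd),
    ← integral_add_adjacent_intervals (hg.mono_set hsq) (hg.mono_set hqd)]
  linarith [integral_mono_on_of_le_Ioo hq.1 (hf.mono_set hsq) (hg.mono_set hsq) hle]

theorem integral_lt_integral_of_le_on_of_lt_on {m : ℝ} (ham : a < m) (hmd : m ≤ d)
    (hf : IntervalIntegrable f volume a d) (hg : IntervalIntegrable g volume a d)
    (hle : ∀ t ∈ Ioc a d, f t ≤ g t) (hlt : ∀ t ∈ Ioo a m, f t < g t) :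
    ∫ t in a..d, f t < ∫ t in a..d, g t := by
  refine integral_lt_integral_of_ae_le_of_measure_setOfPred_lt_ne_zero (ham.le.trans hmd) hf hg
    (ae_restrict_of_forall_mem measurableSet_Ioc hle) ?_
  rw [Measure.restrict_apply' measurableSet_Ioc]
  have hsub : Ioo a m ⊆ {t | f t < g t} ∩ Ioc a d := fun t ht =>
    ⟨hlt t ht, ht.1, ht.2.le.trans hmd⟩
  exact ((measure_mono hsub).trans_lt' (by simpa using ham)).ne'

end TailComparison

section Concave

theorem ConcaveOn.bddAbove_image_Icc {f : ℝ → ℝ} {a b : ℝ} (hf : ConcaveOn ℝ (Icc a b) f) :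
    BddAbove (f '' Icc a b) := by
  refine ⟨2 * f ((a + b) / 2) - min (f a) (f b), ?_⟩
  rintro _ ⟨t, ht, rfl⟩
  have hab : a ≤ b := ht.1.trans ht.2
  have hrefl : a + b - t ∈ Icc a b := ⟨by linarith [ht.2], by linarith [ht.1]⟩
  -- `t` and its reflection `a + b - t` average to the midpoint
  have hmid := hf.2 ht hrefl (by norm_num : (0 : ℝ) ≤ 1 / 2) (by norm_num : (0 : ℝ) ≤ 1 / 2)
    (by norm_num)
  have hlow := hf.ge_on_segment (left_mem_Icc.2 hab) (right_mem_Icc.2 hab)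
    (by rwa [segment_eq_Icc hab] : a + b - t ∈ segment ℝ a b)
  simp only [smul_eq_mul] at hmid
  rw [show 1 / 2 * t + 1 / 2 * (a + b - t) = (a + b) / 2 by ring] at hmid
  linarith

theorem ConcaveOn.intervalIntegrable_rpow {f : ℝ → ℝ} {a b β : ℝ} (hab : a ≤ b)
    (hf : ConcaveOn ℝ (Icc a b) f) (hnn : ∀ t ∈ Icc a b, 0 ≤ f t) (hβ : 0 ≤ β) :
    IntervalIntegrable (fun t => f t ^ β) volume a b := by
  obtain ⟨M, hM⟩ := hf.bddAbove_image_Icc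
  have hcont : ContinuousOn f (Ioo a b) := by
    simpa only [interior_Icc] using hf.continuousOn_interior
  rw [intervalIntegrable_iff_integrableOn_Ioo_of_le hab]
  refine ⟨((Real.continuous_rpow_const hβ).comp_continuousOn hcont).aestronglyMeasurable
    measurableSet_Ioo, .of_bounded (C := M ^ β) ?_⟩
  refine ae_restrict_of_forall_mem measurableSet_Ioo fun t ht => ?_
  have ht' : t ∈ Icc a b := Ioo_subset_Icc_self ht
  rw [Real.norm_of_nonneg (Real.rpow_nonneg (hnn t ht') β)]
  exact Real.rpow_le_rpow (hnn t ht') (hM (mem_image_of_mem f ht')) hβ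

theorem ConcaveOn.nonneg_on_or_nonpos_on {φ : ℝ → ℝ} {S : Set ℝ} (hφ : ConcaveOn ℝ S φ)
    {x s : ℝ} (hx : x ∈ S) (hs : s ∈ S) (hxs : x ≤ s) (hx0 : φ x = 0) :
    (∀ t ∈ Icc x s, 0 ≤ φ t) ∨ ∀ t ∈ S, s ≤ t → φ t ≤ 0 := by
  rcases le_or_gt 0 (φ s) with hs0 | hs0
  · refine Or.inl fun t ht => ?_
    have := hφ.ge_on_segment hx hs (by rwa [segment_eq_Icc hxs])
    rw [hx0] at this
    exact le_min le_rfl hs0 |>.trans this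
  · refine Or.inr fun t ht hst => ?_
    rcases hst.eq_or_lt with rfl | hst
    · exact hs0.le
    have hxs' : x < s := hxs.lt_of_ne (by rintro rfl; linarith)
    have := hφ.right_le_of_le_left hx ht
      (by rw [openSegment_eq_Ioo (hxs'.trans hst)]; exact ⟨hxs', hst⟩) (by linarith)
    linarith

end Concave

section ZeroExtension

variable {h g : ℝ → ℝ} {a b d γ β t : ℝ}

noncomputable def zeroAbovePow (h : ℝ → ℝ) (b β t : ℝ) : ℝ := (if b < t then 0 else h t) ^ β

noncomputable def zeroBelowPow (g : ℝ → ℝ) (γ β t : ℝ) : ℝ := (if t < γ then 0 else g t) ^ β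

theorem zeroAbovePow_of_le (ht : t ≤ b) : zeroAbovePow h b β t = h t ^ β := by
  simp [zeroAbovePow, not_lt.2 ht]

theorem zeroAbovePow_of_lt (hβ : β ≠ 0) (ht : b < t) : zeroAbovePow h b β t = 0 := by
  simp [zeroAbovePow, ht, Real.zero_rpow hβ]

theorem zeroBelowPow_of_le (ht : γ ≤ t) : zeroBelowPow g γ β t = g t ^ β := by
  simp [zeroBelowPow, not_lt.2 ht]

theorem zeroBelowPow_of_lt (hβ : β ≠ 0) (ht : t < γ) : zeroBelowPow g γ β t = 0 := by
  simp [zeroBelowPow, ht, Real.zero_rpow hβ]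

theorem eqOn_zeroAbovePow (hab : a ≤ b) :
    EqOn (fun t => h t ^ β) (zeroAbovePow h b β) (uIoo a b) := fun t ht =>
  (zeroAbovePow_of_le (by rw [uIoo_of_le hab] at ht; exact ht.2.le)).symm

theorem eqOn_zeroAbovePow_zero (hβ : β ≠ 0) (hbd : b ≤ d) :
    EqOn 0 (zeroAbovePow h b β) (uIoo b d) := fun t ht =>
  (zeroAbovePow_of_lt hβ (by rw [uIoo_of_le hbd] at ht; exact ht.1)).symm

theorem eqOn_zeroBelowPow (hγa : γ ≤ a) (had : a ≤ d) :
    EqOn (fun t => g t ^ β) (zeroBelowPow g γ β) (uIoo a d) := fun t ht =>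
  (zeroBelowPow_of_le (by rw [uIoo_of_le had] at ht; exact hγa.trans ht.1.le)).symm

theorem eqOn_zeroBelowPow_zero (hβ : β ≠ 0) (haγ : a ≤ γ) :
    EqOn 0 (zeroBelowPow g γ β) (uIoo a γ) := fun t ht =>
  (zeroBelowPow_of_lt hβ (by rw [uIoo_of_le haγ] at ht; exact ht.2)).symm

theorem intervalIntegrable_zeroAbovePow (hβ : β ≠ 0) (hab : a ≤ b) (hbd : b ≤ d)
    (hi : IntervalIntegrable (fun t => h t ^ β) volume a b) :
    IntervalIntegrable (zeroAbovePow h b β) volume a d :=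
  (hi.congr_uIoo (eqOn_zeroAbovePow hab)).trans
    (intervalIntegrable_const.congr_uIoo (eqOn_zeroAbovePow_zero hβ hbd))

theorem integral_zeroAbovePow (hβ : β ≠ 0) (hab : a ≤ b) (hbd : b ≤ d)
    (hi : IntervalIntegrable (fun t => h t ^ β) volume a b) :
    ∫ t in a..d, zeroAbovePow h b β t = ∫ t in a..b, h t ^ β := by
  rw [← integral_add_adjacent_intervals (b := b)
      (hi.congr_uIoo (eqOn_zeroAbovePow hab))
      (intervalIntegrable_const.congr_uIoo (eqOn_zeroAbovePow_zero hβ hbd)),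
    ← integral_congr_uIoo (eqOn_zeroAbovePow hab),
    ← integral_congr_uIoo (eqOn_zeroAbovePow_zero hβ hbd)]
  simp

theorem intervalIntegrable_zeroBelowPow (hβ : β ≠ 0) (haγ : a ≤ γ) (hγd : γ ≤ d)
    (hi : IntervalIntegrable (fun t => g t ^ β) volume γ d) :
    IntervalIntegrable (zeroBelowPow g γ β) volume a d :=
  (intervalIntegrable_const.congr_uIoo (eqOn_zeroBelowPow_zero hβ haγ)).trans
    (hi.congr_uIoo (eqOn_zeroBelowPow le_rfl hγd))

theorem integral_zeroBelowPow (hβ : β ≠ 0) (haγ : a ≤ γ) (hγd : γ ≤ d)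
    (hi : IntervalIntegrable (fun t => g t ^ β) volume γ d) :
    ∫ t in a..d, zeroBelowPow g γ β t = ∫ t in γ..d, g t ^ β := by
  rw [← integral_add_adjacent_intervals (b := γ)
      (intervalIntegrable_const.congr_uIoo (eqOn_zeroBelowPow_zero hβ haγ))
      (hi.congr_uIoo (eqOn_zeroBelowPow le_rfl hγd)),
    ← integral_congr_uIoo (eqOn_zeroBelowPow le_rfl hγd),
    ← integral_congr_uIoo (eqOn_zeroBelowPow_zero hβ haγ)]
  simp

theorem zeroAbovePow_le_zeroBelowPow (hβ : 0 < β) (hγt : γ ≤ t) (hg : 0 ≤ g t)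
    (hhg : t ≤ b → 0 ≤ h t ∧ h t ≤ g t) : zeroAbovePow h b β t ≤ zeroBelowPow g γ β t := by
  rw [zeroBelowPow_of_le hγt]
  rcases le_or_gt t b with htb | hbt
  · rw [zeroAbovePow_of_le htb]
    exact Real.rpow_le_rpow (hhg htb).1 (hhg htb).2 hβ.le
  · rw [zeroAbovePow_of_lt hβ.ne' hbt]
    exact Real.rpow_nonneg hg β

theorem zeroBelowPow_le_zeroAbovePow (hβ : 0 < β) (htb : t ≤ b) (hh : 0 ≤ h t)
    (hgh : γ ≤ t → 0 ≤ g t ∧ g t ≤ h t) : zeroBelowPow g γ β t ≤ zeroAbovePow h b β t := by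
  rw [zeroAbovePow_of_le htb]
  rcases le_or_gt γ t with hγt | htγ
  · rw [zeroBelowPow_of_le hγt]
    exact Real.rpow_le_rpow (hgh hγt).1 (hgh hγt).2 hβ.le
  · rw [zeroBelowPow_of_lt hβ.ne' htγ]
    exact Real.rpow_nonneg hh β

theorem zeroAbovePow_lt_zeroBelowPow (hβ : 0 < β) (hγt : γ ≤ t) (htb : t ≤ b) (hh : 0 ≤ h t)
    (hlt : h t < g t) : zeroAbovePow h b β t < zeroBelowPow g γ β t := by
  rw [zeroAbovePow_of_le htb, zeroBelowPow_of_le hγt]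
  exact Real.rpow_lt_rpow hh hlt hβ

end ZeroExtension

section Crossing

variable {h g : ℝ → ℝ} {b β γ δ x₁ : ℝ}

theorem le_on_Icc_of_integral_tail_eq (hβ : 0 < β) (hφ : ConcaveOn ℝ (Icc 0 b) (h - g))
    (hnn : ∀ t ∈ Icc 0 b, 0 ≤ h t) (hg : ∀ t ∈ Icc γ δ, 0 ≤ g t) (hγ : 0 ≤ γ)
    (hx₁b : x₁ < b) (hbδ : b ≤ δ) (hcross : g x₁ = h x₁)
    (hH : IntervalIntegrable (zeroAbovePow h b β) volume x₁ δ)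
    (hG : IntervalIntegrable (zeroBelowPow g γ β) volume x₁ δ)
    (htail : ∫ t in x₁..δ, zeroAbovePow h b β t = ∫ t in x₁..δ, zeroBelowPow g γ β t) :
    ∀ t ∈ Icc γ x₁, h t ≤ g t := by
  intro t ht
  by_contra! hgt
  have htx : t < x₁ := ht.2.lt_of_ne (by rintro rfl; linarith)
  have ht0 : t ∈ Icc 0 b := ⟨hγ.trans ht.1, ht.2.trans hx₁b.le⟩
  -- concavity of `h - g` with a zero at `x₁` and a positive value before it forces `h < g` after it
  have hlt : ∀ u ∈ Ioc x₁ b, h u < g u := fun u hu => by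
    have := hφ.lt_right_of_left_lt ht0 ⟨ht0.1.trans (htx.trans hu.1).le, hu.2⟩
      (by rw [openSegment_eq_Ioo (htx.trans hu.1)]; exact ⟨htx, hu.1⟩)
      (by simp only [Pi.sub_apply]; linarith)
    simp only [Pi.sub_apply] at this
    linarith
  have hγu : ∀ u, x₁ < u → γ ≤ u := fun u hu => ht.1.trans (htx.trans hu).le
  have hu0 : ∀ u, x₁ < u → 0 ≤ u := fun u hu => hγ.trans (hγu u hu)
  have := integral_lt_integral_of_le_on_of_lt_on hx₁b hbδ hH hG
    (fun u hu => zeroAbovePow_le_zeroBelowPow hβ (hγu u hu.1) (hg u ⟨hγu u hu.1, hu.2⟩)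
      fun hub => ⟨hnn u ⟨hu0 u hu.1, hub⟩, (hlt u ⟨hu.1, hub⟩).le⟩)
    (fun u hu => zeroAbovePow_lt_zeroBelowPow hβ (hγu u hu.1) hu.2.le
      (hnn u ⟨hu0 u hu.1, hu.2.le⟩) (hlt u ⟨hu.1, hu.2.le⟩))
  linarith

theorem zeroPow_single_crossing (hβ : 0 < β) (hφ : ConcaveOn ℝ (Icc 0 b) (h - g))
    (hnn : ∀ t ∈ Icc 0 b, 0 ≤ h t) (hg : ∀ t ∈ Icc γ δ, 0 ≤ g t) (hx₁ : x₁ ∈ Icc 0 b)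
    (hγx : γ ≤ x₁) (hcross : g x₁ = h x₁) {s : ℝ} (hs : s ∈ Icc x₁ δ) :
    (∀ t ∈ Ioo x₁ s, zeroBelowPow g γ β t ≤ zeroAbovePow h b β t) ∨
      ∀ t ∈ Ioo s δ, zeroAbovePow h b β t ≤ zeroBelowPow g γ β t := by
  have hγt : ∀ t, x₁ < t → γ ≤ t := fun t ht => hγx.trans ht.le
  rcases le_or_gt b s with hbs | hsb
  · exact Or.inr fun t ht => zeroAbovePow_le_zeroBelowPow hβ (hγt t (hs.1.trans_lt ht.1))
      (hg t ⟨hγt t (hs.1.trans_lt ht.1), ht.2.le⟩) fun htb => absurd (hbs.trans_lt ht.1) htb.not_gt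
  rcases hφ.nonneg_on_or_nonpos_on hx₁ ⟨hx₁.1.trans hs.1, hsb.le⟩ hs.1
    (by simp [hcross]) with hpos | hneg
  · refine Or.inl fun t ht => zeroBelowPow_le_zeroAbovePow hβ (ht.2.le.trans hsb.le)
      (hnn t ⟨hx₁.1.trans ht.1.le, ht.2.le.trans hsb.le⟩) fun _ => ⟨hg t ⟨hγt t ht.1, ?_⟩, ?_⟩
    · linarith [ht.2, hs.2]
    · have := hpos t (Ioo_subset_Icc_self ht)
      simp only [Pi.sub_apply] at this
      linarith
  · refine Or.inr fun t ht => zeroAbovePow_le_zeroBelowPow hβ (hγt t (hs.1.trans_lt ht.1))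
      (hg t ⟨hγt t (hs.1.trans_lt ht.1), ht.2.le⟩) fun htb =>
        ⟨hnn t ⟨hx₁.1.trans (hs.1.trans ht.1.le), htb⟩, ?_⟩
    have := hneg t ⟨hx₁.1.trans (hs.1.trans ht.1.le), htb⟩ ht.1.le
    simp only [Pi.sub_apply] at this
    linarith

theorem integral_zeroAbovePow_le_integral_zeroBelowPow (hβ : 0 < β)
    (hφ : ConcaveOn ℝ (Icc 0 b) (h - g)) (hnn : ∀ t ∈ Icc 0 b, 0 ≤ h t)
    (hg : ∀ t ∈ Icc γ δ, 0 ≤ g t) (hγ : 0 ≤ γ) (hγx : γ ≤ x₁) (hx₁b : x₁ < b) (hbδ : b ≤ δ)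
    (hcross : g x₁ = h x₁) (hH : IntervalIntegrable (zeroAbovePow h b β) volume 0 δ)
    (hG : IntervalIntegrable (zeroBelowPow g γ β) volume 0 δ)
    (htotal : ∫ t in 0..δ, zeroAbovePow h b β t = ∫ t in 0..δ, zeroBelowPow g γ β t)
    (htail : ∫ t in x₁..δ, zeroAbovePow h b β t = ∫ t in x₁..δ, zeroBelowPow g γ β t)
    {s : ℝ} (hs : s ∈ Icc 0 δ) :
    ∫ t in s..δ, zeroAbovePow h b β t ≤ ∫ t in s..δ, zeroBelowPow g γ β t := by
  have hx₁ : x₁ ∈ Icc 0 δ := ⟨hγ.trans hγx, hx₁b.le.trans hbδ⟩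
  rcases lt_or_ge s γ with hsγ | hγs
  · exact integral_tail_le_of_ge_on hH hG hs htotal.le fun t ht =>
      zeroBelowPow_le_zeroAbovePow hβ (by linarith [ht.2]) (hnn t ⟨ht.1.le, by linarith [ht.2]⟩)
        fun hγt => absurd (ht.2.trans hsγ) hγt.not_gt
  have hle := le_on_Icc_of_integral_tail_eq hβ hφ hnn hg hγ hx₁b hbδ hcross
    (hH.of_mem_Icc_left hx₁) (hG.of_mem_Icc_left hx₁) htail
  rcases le_or_gt s x₁ with hsx | hxs
  · refine integral_tail_le_of_le_on (hH.of_mem_Icc_left hs) (hG.of_mem_Icc_left hs)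
      ⟨hsx, hx₁.2⟩ htail.le fun t ht => zeroAbovePow_le_zeroBelowPow hβ (hγs.trans ht.1.le)
        (hg t ⟨hγs.trans ht.1.le, by linarith [ht.2]⟩) fun _ =>
          ⟨hnn t ⟨?_, ?_⟩, hle t ⟨?_, ht.2.le⟩⟩
    all_goals linarith [ht.1, ht.2]
  rcases zeroPow_single_crossing hβ hφ hnn hg ⟨hx₁.1, hx₁b.le⟩ hγx hcross ⟨hxs.le, hs.2⟩
    with hge | hle
  · exact integral_tail_le_of_ge_on (hH.of_mem_Icc_left hx₁) (hG.of_mem_Icc_left hx₁)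
      ⟨hxs.le, hs.2⟩ htail.le hge
  · exact integral_mono_on_of_le_Ioo hs.2 (hH.of_mem_Icc_left hs) (hG.of_mem_Icc_left hs) hle

end Crossing

theorem stmt_17_general (b β γ δ c x₁ : ℝ) (h : ℝ → ℝ) (hb : 0 < b) (hβ : 0 < β)
    (hγ : 0 ≤ γ) (hγδ : γ < δ) (hbδ : b ≤ δ) (hc : 0 < c)
    (hx₁ : γ < x₁) (hx₁b : x₁ < b)
    (hconc : ConcaveOn ℝ (Set.Icc 0 b) h)
    (hnn : ∀ t ∈ Set.Icc (0 : ℝ) b, 0 ≤ h t)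
    (hcross : c * (δ - x₁) = h x₁)
    (htotal : (∫ t in γ..δ, (c * (δ - t)) ^ β) = ∫ t in (0 : ℝ)..b, h t ^ β)
    (htail : (∫ t in x₁..δ, (c * (δ - t)) ^ β) = ∫ t in x₁..b, h t ^ β) :
    ∀ s ∈ Set.Icc (0 : ℝ) δ,
      (∫ t in s..δ, (if b < t then (0 : ℝ) else h t) ^ β) ≤
        (∫ t in s..δ, (if t < γ then (0 : ℝ) else c * (δ - t)) ^ β) := by
  set g : ℝ → ℝ := fun t => c * (δ - t) with hg_def
  have hgconv : ConvexOn ℝ (Icc 0 b) g := ⟨convex_Icc 0 b, fun x _ y _ p q _ _ hpq =>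
    le_of_eq (by simp only [hg_def, smul_eq_mul]; linear_combination -(c * δ) * hpq)⟩
  have hhi := hconc.intervalIntegrable_rpow hb.le hnn hβ.le
  have hgi : IntervalIntegrable (fun t => g t ^ β) volume γ δ :=
    ((Real.continuous_rpow_const hβ.le).comp (by fun_prop : Continuous g)).intervalIntegrable _ _
  have hx₁δ : x₁ ∈ Icc γ δ := ⟨hx₁.le, hx₁b.le.trans hbδ⟩
  refine fun s hs => integral_zeroAbovePow_le_integral_zeroBelowPow hβ (hconc.sub hgconv) hnn
    (fun t ht => mul_nonneg hc.le (sub_nonneg.2 ht.2)) hγ hx₁.le hx₁b hbδ hcross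
    (intervalIntegrable_zeroAbovePow hβ.ne' hb.le hbδ hhi)
    (intervalIntegrable_zeroBelowPow hβ.ne' hγ hγδ.le hgi) ?_ ?_ hs
  · rw [integral_zeroAbovePow hβ.ne' hb.le hbδ hhi, integral_zeroBelowPow hβ.ne' hγ hγδ.le hgi,
      htotal]
  · rw [integral_zeroAbovePow hβ.ne' hx₁b.le hbδ (hhi.of_mem_Icc_left ⟨hγ.trans hx₁δ.1, hx₁b.le⟩),
      ← integral_congr_uIoo (eqOn_zeroBelowPow hx₁δ.1 hx₁δ.2), htail]

theorem stmt_17 (b β γ δ c x₁ : ℝ) (h : ℝ → ℝ) (hb : 0 < b) (hβ : 0 < β)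
    (hγ : 0 ≤ γ) (hγδ : γ < δ) (hbδ : b ≤ δ) (hc : 0 < c)
    (hx₁ : γ < x₁) (hx₁b : x₁ < b)
    (hconc : ConcaveOn ℝ (Set.Icc 0 b) h)
    (hnn : ∀ t ∈ Set.Icc (0 : ℝ) b, 0 ≤ h t)
    (hsupp : ∀ t ∈ Set.Ioo (0 : ℝ) b, 0 < h t)
    (hcross : c * (δ - x₁) = h x₁)
    (htotal : (∫ t in γ..δ, (c * (δ - t)) ^ β) = ∫ t in (0 : ℝ)..b, h t ^ β)
    (htail : (∫ t in x₁..δ, (c * (δ - t)) ^ β) = ∫ t in x₁..b, h t ^ β) :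
    ∀ s ∈ Set.Icc (0 : ℝ) δ,
      (∫ t in s..δ, (if b < t then (0 : ℝ) else h t) ^ β) ≤
        (∫ t in s..δ, (if t < γ then (0 : ℝ) else c * (δ - t)) ^ β) :=
  stmt_17_general b β γ δ c x₁ h hb hβ hγ hγδ hbδ hc hx₁ hx₁b hconc hnn hcross htotal htail
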